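/- arXiv:2406.05973 — 2 statements merged into one kernel-verified Lean document; each statement's English description precedes it below -/
import Mathlib

section
/- Let σ: ℝⁿ → ℂ be a smooth function such that for every multi-index α there is C_α with |∂_ξ^α σ(ξ)| ≤ C_α ⟨ξ⟩^{m − |α|} for all ξ ∈ ℝⁿ (a Euclidean symbol estimate of order m). Then the restriction of σ to ℤⁿ satisfies the toroidal symbol estimates: for every α ∈ ℕ₀ⁿ there is C'_α with |Δ_ξ^α σ(ξ)| ≤ C'_α ⟨ξ⟩^{m − |α|} for all ξ ∈ ℤⁿ. -/
/-- Forward partial difference operator in direction `j`. -/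
def deltaJ (n : ℕ) (j : Fin n) (f : (Fin n → ℤ) → ℂ) : (Fin n → ℤ) → ℂ :=
  fun ξ => f (fun i => ξ i + if i = j then 1 else 0) - f ξ

/-- Iterated forward difference operator `Δ_ξ^α`. -/
def deltaPow (n : ℕ) (α : Fin n → ℕ) (f : (Fin n → ℤ) → ℂ) : (Fin n → ℤ) → ℂ :=
  ((List.finRange n).foldr (fun j g => (deltaJ n j)^[α j] ∘ g) id) f

/-- Japanese bracket `⟨ξ⟩` of a lattice point. -/
noncomputable def jap {n : ℕ} (ξ : Fin n → ℤ) : ℝ :=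
  Real.sqrt (1 + ∑ i, ((ξ i : ℝ)) ^ 2)

/-- Real forward difference in direction `j`. -/
noncomputable def rD {n : ℕ} (j : Fin n) (g : EuclideanSpace ℝ (Fin n) → ℂ) :
    EuclideanSpace ℝ (Fin n) → ℂ :=
  fun ξ => g (ξ + EuclideanSpace.single j 1) - g ξ

/-- Euclidean symbol estimates of order `m`. -/
def SymEst (n : ℕ) (m : ℝ) (g : EuclideanSpace ℝ (Fin n) → ℂ) : Prop :=
  ContDiff ℝ (⊤ : ℕ∞) g ∧ ∀ k : ℕ, ∃ C > 0, ∀ ξ,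
    ‖iteratedFDeriv ℝ k g ξ‖ ≤ C * Real.sqrt (1 + ‖ξ‖ ^ 2) ^ (m - (k : ℝ))


lemma bracket_rpow_le {n : ℕ} {x y : EuclideanSpace ℝ (Fin n)} (h : ‖y - x‖ ≤ 1) (s : ℝ) :
    Real.sqrt (1 + ‖y‖^2) ^ s ≤ 2 ^ |s| * Real.sqrt (1 + ‖x‖^2) ^ s := by
  have key : ∀ u v : EuclideanSpace ℝ (Fin n), ‖v - u‖ ≤ 1 →
      Real.sqrt (1 + ‖v‖^2) ≤ 2 * Real.sqrt (1 + ‖u‖^2) := by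
    intro u v huv
    have h2 : (2:ℝ) * Real.sqrt (1 + ‖u‖^2) = Real.sqrt (4 * (1 + ‖u‖^2)) := by
      rw [Real.sqrt_mul (by norm_num), show (4:ℝ) = 2^2 by norm_num, Real.sqrt_sq (by norm_num)]
    rw [h2]
    apply Real.sqrt_le_sqrt
    have hv : ‖v‖ ≤ ‖u‖ + 1 := by
      have := norm_sub_norm_le v u
      linarith
    have h0 : (0:ℝ) ≤ ‖u‖ := norm_nonneg u
    nlinarith [sq_nonneg (‖u‖ - 1), norm_nonneg v]
  have hb0 : 0 < Real.sqrt (1 + ‖x‖^2) := Real.sqrt_pos.2 (by positivity)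
  have ha0 : 0 < Real.sqrt (1 + ‖y‖^2) := Real.sqrt_pos.2 (by positivity)
  rcases le_or_gt 0 s with hs | hs
  · rw [abs_of_nonneg hs]
    calc Real.sqrt (1 + ‖y‖^2) ^ s ≤ (2 * Real.sqrt (1 + ‖x‖^2)) ^ s :=
          Real.rpow_le_rpow ha0.le (key x y h) hs
      _ = 2 ^ s * Real.sqrt (1 + ‖x‖^2) ^ s := Real.mul_rpow (by norm_num) hb0.le
  · rw [abs_of_neg hs]
    have hba : Real.sqrt (1 + ‖x‖^2) / 2 ≤ Real.sqrt (1 + ‖y‖^2) := by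
      have := key y x (by rwa [norm_sub_rev])
      linarith
    calc Real.sqrt (1 + ‖y‖^2) ^ s ≤ (Real.sqrt (1 + ‖x‖^2) / 2) ^ s :=
          Real.rpow_le_rpow_of_nonpos (by positivity) hba hs.le
      _ = 2 ^ (-s) * Real.sqrt (1 + ‖x‖^2) ^ s := by
          rw [Real.div_rpow hb0.le (by norm_num), Real.rpow_neg (by norm_num)]
          ring



lemma fderiv_shift {n : ℕ} {F : Type*} [NormedAddCommGroup F] [NormedSpace ℝ F]
    (f : EuclideanSpace ℝ (Fin n) → F) (hf : Differentiable ℝ f)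
    (v x : EuclideanSpace ℝ (Fin n)) :
    fderiv ℝ (fun y => f (y + v)) x = fderiv ℝ f (x + v) := by
  have h1 : HasFDerivAt (fun y : EuclideanSpace ℝ (Fin n) => y + v)
      (ContinuousLinearMap.id ℝ _) x := (hasFDerivAt_id x).add_const v
  have h2 : HasFDerivAt (fun y => f (y + v)) (fderiv ℝ f (x + v)) x := by
    exact (hf (x + v)).hasFDerivAt.comp x h1
  exact h2.fderiv

lemma iteratedFDeriv_shift {n : ℕ} (f : EuclideanSpace ℝ (Fin n) → ℂ) (hf : ContDiff ℝ (⊤ : ℕ∞) f)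
    (v : EuclideanSpace ℝ (Fin n)) (k : ℕ) :
    iteratedFDeriv ℝ k (fun y => f (y + v)) = fun x => iteratedFDeriv ℝ k f (x + v) := by
  induction k with
  | zero => funext x; simp [iteratedFDeriv_zero_eq_comp]
  | succ k IH =>
    funext x
    rw [iteratedFDeriv_succ_eq_comp_left, iteratedFDeriv_succ_eq_comp_left]
    simp only [Function.comp_apply]
    congr 1
    rw [IH]
    exact fderiv_shift _ (hf.differentiable_iteratedFDeriv (by exact_mod_cast ENat.coe_lt_top k)) v x

lemma SymEst.delta {n : ℕ} {m : ℝ} {g : EuclideanSpace ℝ (Fin n) → ℂ} (h : SymEst n m g)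
    {v : EuclideanSpace ℝ (Fin n)} (hv : ‖v‖ ≤ 1) :
    SymEst n (m - 1) (fun ξ => g (ξ + v) - g ξ) := by
  obtain ⟨hg, hb⟩ := h
  have hgv : ContDiff ℝ (⊤ : ℕ∞) (fun ξ => g (ξ + v)) := hg.comp (contDiff_id.add contDiff_const)
  refine ⟨hgv.sub hg, fun k => ?_⟩
  obtain ⟨C, hC, hCb⟩ := hb (k + 1)
  set s : ℝ := m - ((k : ℝ) + 1) with hs
  refine ⟨C * 2 ^ |s|, by positivity, fun ξ => ?_⟩
  have e1 : iteratedFDeriv ℝ k (fun ξ => g (ξ + v) - g ξ) ξ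
      = iteratedFDeriv ℝ k g (ξ + v) - iteratedFDeriv ℝ k g ξ := by
    have heq : (fun ξ => g (ξ + v) - g ξ) = (fun ξ => g (ξ + v)) + (fun x => -g x) := by
      funext x; simp [sub_eq_add_neg]
    rw [heq, iteratedFDeriv_add_apply (hgv.of_le (by exact_mod_cast le_top)).contDiffAt (hg.neg.of_le (by exact_mod_cast le_top)).contDiffAt,
      show (fun x => -g x) = -g from rfl, iteratedFDeriv_neg_apply,
      iteratedFDeriv_shift g hg v k, sub_eq_add_neg]
  rw [e1]
  have hdiff : Differentiable ℝ (iteratedFDeriv ℝ k g) :=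
    hg.differentiable_iteratedFDeriv (by exact_mod_cast ENat.coe_lt_top k)
  have hseg : ∀ y ∈ segment ℝ ξ (ξ + v), ‖y - ξ‖ ≤ 1 := by
    intro y hy
    rw [segment_eq_image'] at hy
    obtain ⟨t, ht, rfl⟩ := hy
    have : ξ + t • (ξ + v - ξ) - ξ = t • v := by
      rw [add_sub_cancel_left, add_sub_cancel_left]
    rw [this, norm_smul]
    calc ‖t‖ * ‖v‖ ≤ 1 * 1 := by
          apply mul_le_mul _ hv (norm_nonneg v) zero_le_one
          rw [Real.norm_eq_abs, abs_of_nonneg ht.1]; exact ht.2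
      _ = 1 := by norm_num
  have hbound : ∀ y ∈ segment ℝ ξ (ξ + v),
      ‖fderiv ℝ (iteratedFDeriv ℝ k g) y‖ ≤ C * 2 ^ |s| * Real.sqrt (1 + ‖ξ‖ ^ 2) ^ s := by
    intro y hy
    rw [norm_fderiv_iteratedFDeriv]
    calc ‖iteratedFDeriv ℝ (k + 1) g y‖ ≤ C * Real.sqrt (1 + ‖y‖ ^ 2) ^ (m - ((k + 1 : ℕ) : ℝ)) :=
          hCb y
      _ ≤ C * (2 ^ |s| * Real.sqrt (1 + ‖ξ‖ ^ 2) ^ s) := by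
          apply mul_le_mul_of_nonneg_left _ hC.le
          have : (m - ((k + 1 : ℕ) : ℝ)) = s := by push_cast [hs]; ring
          rw [this]
          exact bracket_rpow_le (hseg y hy) s
      _ = C * 2 ^ |s| * Real.sqrt (1 + ‖ξ‖ ^ 2) ^ s := by ring
  have hmvt := (convex_segment ξ (ξ + v)).norm_image_sub_le_of_norm_fderiv_le
    (fun y _ => hdiff y) hbound
    (left_mem_segment ℝ ξ (ξ + v)) (right_mem_segment ℝ ξ (ξ + v))
  have hnorm : ‖ξ + v - ξ‖ ≤ 1 := by rw [add_sub_cancel_left]; exact hv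
  have hexp : m - 1 - (k : ℝ) = s := by rw [hs]; ring
  rw [hexp]
  calc ‖iteratedFDeriv ℝ k g (ξ + v) - iteratedFDeriv ℝ k g ξ‖
      ≤ C * 2 ^ |s| * Real.sqrt (1 + ‖ξ‖ ^ 2) ^ s * ‖ξ + v - ξ‖ := hmvt
    _ ≤ C * 2 ^ |s| * Real.sqrt (1 + ‖ξ‖ ^ 2) ^ s * 1 := by
        apply mul_le_mul_of_nonneg_left hnorm
        have : (0:ℝ) < Real.sqrt (1 + ‖ξ‖ ^ 2) := Real.sqrt_pos.2 (by positivity)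
        positivity
    _ = C * 2 ^ |s| * Real.sqrt (1 + ‖ξ‖ ^ 2) ^ s := by ring

lemma SymEst.rD_iter {n : ℕ} {m : ℝ} {g : EuclideanSpace ℝ (Fin n) → ℂ} (h : SymEst n m g)
    (j : Fin n) (a : ℕ) : SymEst n (m - a) ((rD j)^[a] g) := by
  induction a generalizing m g with
  | zero => simpa using h
  | succ a ih =>
    rw [Function.iterate_succ_apply']
    have hv : ‖EuclideanSpace.single j (1:ℝ)‖ ≤ 1 := by
      rw [EuclideanSpace.norm_single]; norm_num
    have := (ih h).delta hv
    have e : m - ((a : ℝ) + 1) = m - a - 1 := by ring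
    rw [show ((a+1 : ℕ) : ℝ) = (a : ℝ) + 1 by push_cast; ring, e]
    exact this

/-- Fold of real difference operators along a list. -/
noncomputable def rFold {n : ℕ} (α : Fin n → ℕ) (l : List (Fin n)) :
    (EuclideanSpace ℝ (Fin n) → ℂ) → (EuclideanSpace ℝ (Fin n) → ℂ) :=
  l.foldr (fun j g => (rD j)^[α j] ∘ g) id

lemma SymEst.rFold_est {n : ℕ} {m : ℝ} {g : EuclideanSpace ℝ (Fin n) → ℂ} (h : SymEst n m g)
    (α : Fin n → ℕ) (l : List (Fin n)) :
    SymEst n (m - ((l.map fun j => (α j : ℝ)).sum)) (rFold α l g) := by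
  induction l with
  | nil => simpa [rFold] using h
  | cons j l ih =>
    have h1 := ih.rD_iter j (α j)
    have e : m - (l.map fun j => (α j : ℝ)).sum - (α j : ℝ)
        = m - (((j :: l).map fun j => (α j : ℝ)).sum) := by
      simp [List.sum_cons]; ring
    rw [← e]
    exact h1

def coeZ {n : ℕ} (ξ : Fin n → ℤ) : EuclideanSpace ℝ (Fin n) := WithLp.toLp 2 (fun i => (ξ i : ℝ))

def res {n : ℕ} (g : EuclideanSpace ℝ (Fin n) → ℂ) : (Fin n → ℤ) → ℂ :=
  fun ξ => g (coeZ ξ)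

lemma deltaJ_res {n : ℕ} (j : Fin n) (g : EuclideanSpace ℝ (Fin n) → ℂ) :
    deltaJ n j (res g) = res (rD j g) := by
  funext ξ
  simp only [deltaJ, res, rD]
  have harg : coeZ (fun i => ξ i + if i = j then 1 else 0)
      = coeZ ξ + EuclideanSpace.single j (1:ℝ) := by
    ext i
    have h2 : (coeZ ξ + EuclideanSpace.single j (1:ℝ)) i
        = (ξ i : ℝ) + (if i = j then 1 else 0) := by
      simp [PiLp.add_apply, EuclideanSpace.single_apply, coeZ]
    rw [h2]
    simp only [coeZ]
    push_cast
    split <;> simp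
  rw [harg]

lemma iter_res {n : ℕ} (j : Fin n) (a : ℕ) (g : EuclideanSpace ℝ (Fin n) → ℂ) :
    (deltaJ n j)^[a] (res g) = res ((rD j)^[a] g) := by
  induction a generalizing g with
  | zero => rfl
  | succ a ih =>
    rw [Function.iterate_succ_apply, Function.iterate_succ_apply, deltaJ_res, ih]

lemma fold_res {n : ℕ} (α : Fin n → ℕ) (l : List (Fin n)) (g : EuclideanSpace ℝ (Fin n) → ℂ) :
    (l.foldr (fun j f => (deltaJ n j)^[α j] ∘ f) id) (res g) = res (rFold α l g) := by
  induction l with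
  | nil => rfl
  | cons j l ih =>
    simp only [List.foldr_cons, Function.comp_apply, rFold] at *
    rw [ih, iter_res]

/-- A smooth Euclidean symbol of order `m` restricts to a toroidal symbol of order `m`
on the lattice `ℤⁿ`. -/
theorem euclidean_symbol_restricts_to_toroidal (n : ℕ) (m : ℝ)
    (σ : EuclideanSpace ℝ (Fin n) → ℂ) (hσ : ContDiff ℝ (⊤ : ℕ∞) σ)
    (hbound : ∀ k : ℕ, ∃ C > 0, ∀ ξ : EuclideanSpace ℝ (Fin n),
      ‖iteratedFDeriv ℝ k σ ξ‖ ≤ C * Real.sqrt (1 + ‖ξ‖ ^ 2) ^ (m - (k : ℝ))) :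
    ∀ α : Fin n → ℕ, ∃ C > 0, ∀ ξ : Fin n → ℤ,
      ‖deltaPow n α (fun η => σ (WithLp.toLp 2 (fun i => ((η i : ℝ))))) ξ‖ ≤
        C * jap ξ ^ (m - (∑ i, (α i : ℝ))) := by
  intro α
  have hσS : SymEst n m σ := ⟨hσ, hbound⟩
  have hfold := hσS.rFold_est α (List.finRange n)
  obtain ⟨C, hC, hCb⟩ := hfold.2 0
  refine ⟨C, hC, fun ξ => ?_⟩
  set x : EuclideanSpace ℝ (Fin n) := coeZ ξ with hx
  have hres : deltaPow n α (fun η => σ (WithLp.toLp 2 (fun i => ((η i : ℝ))))) ξ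
      = rFold α (List.finRange n) σ x := by
    exact congrFun (fold_res α (List.finRange n) σ) ξ
  rw [hres]
  have h0 := hCb x
  rw [norm_iteratedFDeriv_zero] at h0
  have hjap : Real.sqrt (1 + ‖x‖ ^ 2) = jap ξ := by
    unfold jap
    congr 1
    have hn : ‖x‖ ^ 2 = ∑ i, (ξ i : ℝ) ^ 2 := by
      rw [EuclideanSpace.norm_eq, Real.sq_sqrt (by positivity)]
      simp [Real.norm_eq_abs, sq_abs, hx, coeZ]
    rw [hn]
  have hexp : m - (((List.finRange n).map fun j => (α j : ℝ)).sum) - ((0:ℕ):ℝ)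
      = m - (∑ i, (α i : ℝ)) := by
    rw [Fin.sum_univ_def]
    push_cast
    ring
  rw [hjap, hexp] at h0
  exact h0
end

section
/- Let ν > 0 and 0 < ρ ≤ 1. The symbol σ(ξ) = |ξ|^ν e^{i|ξ|^{1−ρ}} on ℤⁿ (set σ(0)=0) satisfies the first-difference estimate of the class S^{ν}_{ρ,0}: for each j there is C with |Δ_{ξ_j} σ(ξ)| ≤ C ⟨ξ⟩^{ν − ρ} for all ξ ∈ ℤⁿ. -/
/-!
Write `σ(ξ) = f(|ξ|²)` with `f(u) = u^{ν/2} e^{i u^{(1-ρ)/2}}`. For `u ≥ 1`,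
`|f'(u)| ≲ u^{(ν-ρ-1)/2}` because `ρ ≤ 1`. Shifting `ξ_j` by one changes `|ξ|²` by
`2ξ_j + 1 = O(⟨ξ⟩)`, and once `|ξ|² ≥ 4` it keeps `|ξ|²` within a factor `4`, so the mean
value theorem gives `O(⟨ξ⟩^{ν-ρ})`. For `|ξ|² ≤ 4` the crude bound `|σ(ξ)| = |ξ|^ν` suffices.
-/

/-- Euclidean norm of a lattice point. -/
noncomputable def znorm {n : ℕ} (ξ : Fin n → ℤ) : ℝ :=
  Real.sqrt (∑ i, ((ξ i : ℝ)) ^ 2)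

/-- Symbol of the oscillating multiplier `(-Δ)^{ν/2} e^{i(-Δ)^{(1-ρ)/2}}`
(up to powers of `2π`): `σ(ξ) = |ξ|^ν e^{i|ξ|^{1-ρ}}`, with `σ(0) = 0`. -/
noncomputable def oscSymbol {n : ℕ} (ν ρ : ℝ) (ξ : Fin n → ℤ) : ℂ :=
  ((znorm ξ ^ ν : ℝ) : ℂ) * Complex.exp (Complex.I * ((znorm ξ ^ (1 - ρ) : ℝ) : ℂ))

theorem Real.rpow_le_rpow_mul_of_le_mul {x y K : ℝ} (q : ℝ) (hx : 0 < x) (hy : 0 < y)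
    (hK : 1 ≤ K) (hxy : x ≤ K * y) (hyx : y ≤ K * x) : x ^ q ≤ K ^ |q| * y ^ q := by
  have hK₀ : 0 < K := one_pos.trans_le hK
  rcases le_or_gt 0 q with hq | hq
  · rw [abs_of_nonneg hq, ← Real.mul_rpow hK₀.le hy.le]
    exact Real.rpow_le_rpow hx.le hxy hq
  · rw [abs_of_neg hq, Real.rpow_neg hK₀.le, ← div_eq_inv_mul, ← Real.div_rpow hy.le hK₀.le]
    exact Real.rpow_le_rpow_of_nonpos (div_pos hy hK₀)
      (div_le_of_le_mul₀ hK₀.le hx.le (by linarith)) hq.le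

theorem add_two_mul_add_one_mem_Icc {a t : ℝ} (ha : 4 ≤ a) (ht : t ^ 2 ≤ a) :
    a + 2 * t + 1 ∈ Set.Icc (a / 4) (4 * a) := by
  obtain ⟨r, hr₀, rfl⟩ : ∃ r, 0 ≤ r ∧ a = r ^ 2 :=
    ⟨√a, Real.sqrt_nonneg a, (Real.sq_sqrt (by linarith)).symm⟩
  have hr : 2 ≤ r := by nlinarith
  obtain ⟨htr₁, htr₂⟩ := abs_le_of_sq_le_sq' ht hr₀
  constructor <;> nlinarith

open Complex in
noncomputable def oscProfile (α β u : ℝ) : ℂ :=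
  ((u ^ α : ℝ) : ℂ) * exp (I * ((u ^ β : ℝ) : ℂ))

namespace oscProfile

variable {α β : ℝ}

open Complex in
theorem hasDerivAt {u : ℝ} (hu : 0 < u) :
    HasDerivAt (oscProfile α β)
      (((α * u ^ (α - 1) : ℝ) : ℂ) * exp (I * ((u ^ β : ℝ) : ℂ)) +
        ((u ^ α : ℝ) : ℂ) * (exp (I * ((u ^ β : ℝ) : ℂ)) * (I * ((β * u ^ (β - 1) : ℝ) : ℂ)))) u :=
  (Real.hasDerivAt_rpow_const (Or.inl hu.ne')).ofReal_comp.mul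
    (((Real.hasDerivAt_rpow_const (Or.inl hu.ne')).ofReal_comp.const_mul I).cexp)

theorem norm_deriv_le (hα : 0 ≤ α) (hβ : 0 ≤ β) {u : ℝ} (hu : 1 ≤ u) :
    ‖deriv (oscProfile α β) u‖ ≤ (α + β) * u ^ (α + β - 1) := by
  have hu₀ : 0 < u := one_pos.trans_le hu
  have hpow : u ^ α * u ^ (β - 1) = u ^ (α + β - 1) := by
    rw [← Real.rpow_add hu₀, add_sub_assoc]
  have hmono : u ^ (α - 1) ≤ u ^ (α + β - 1) :=
    Real.rpow_le_rpow_of_exponent_le hu (by linarith)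
  rw [(hasDerivAt hu₀).deriv]
  refine (norm_add_le _ _).trans ?_
  simp only [norm_mul, Complex.norm_exp_I_mul_ofReal, Complex.norm_I, Complex.norm_real,
    Real.norm_eq_abs, abs_of_nonneg (Real.rpow_nonneg hu₀.le _), abs_of_nonneg hα,
    abs_of_nonneg hβ, mul_one, one_mul]
  calc α * u ^ (α - 1) + u ^ α * (β * u ^ (β - 1))
      ≤ α * u ^ (α + β - 1) + β * u ^ (α + β - 1) := by
        rw [mul_left_comm, hpow]; gcongr
    _ = (α + β) * u ^ (α + β - 1) := by ring

theorem norm_sub_le (hα : 0 ≤ α) (hβ : 0 ≤ β) {a b : ℝ} (ha : 4 ≤ a)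
    (hb : b ∈ Set.Icc (a / 4) (4 * a)) :
    ‖oscProfile α β b - oscProfile α β a‖ ≤
      (α + β) * 8 ^ |α + β - 1| * (1 + a) ^ (α + β - 1) * |b - a| := by
  have hone : ∀ u ∈ Set.Icc (a / 4) (4 * a), 1 ≤ u := fun u hu => by linarith [hu.1]
  refine (convex_Icc _ _).norm_image_sub_le_of_norm_deriv_le
    (fun u hu => (hasDerivAt (one_pos.trans_le (hone u hu))).differentiableAt)
    (fun u hu => ?_) ⟨by linarith, by linarith⟩ hb
  calc ‖deriv (oscProfile α β) u‖ ≤ (α + β) * u ^ (α + β - 1) := norm_deriv_le hα hβ (hone u hu)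
    _ ≤ (α + β) * (8 ^ |α + β - 1| * (1 + a) ^ (α + β - 1)) := by
        gcongr
        exact Real.rpow_le_rpow_mul_of_le_mul _ (by linarith [hone u hu]) (by linarith)
          (by norm_num) (by linarith [hu.2]) (by linarith [hu.1])
    _ = _ := by ring

end oscProfile

section Lattice

variable {n : ℕ}

theorem sum_sq_shift (ξ : Fin n → ℤ) (j : Fin n) :
    ∑ i, (((ξ i + if i = j then 1 else 0 : ℤ)) : ℝ) ^ 2 = ∑ i, ((ξ i : ℝ)) ^ 2 + 2 * ξ j + 1 := by
  have hterm : ∀ i, (((ξ i + if i = j then 1 else 0 : ℤ)) : ℝ) ^ 2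
      = ((ξ i : ℝ)) ^ 2 + if i = j then 2 * (ξ i : ℝ) + 1 else 0 := fun i => by
    split_ifs <;> push_cast <;> ring
  simp only [hterm, Finset.sum_add_distrib, Finset.sum_ite_eq', Finset.mem_univ, if_true]
  ring

theorem sq_le_sum_sq (ξ : Fin n → ℤ) (j : Fin n) : ((ξ j : ℝ)) ^ 2 ≤ ∑ i, ((ξ i : ℝ)) ^ 2 :=
  Finset.single_le_sum (fun i _ => sq_nonneg ((ξ i : ℝ))) (Finset.mem_univ j)

theorem sq_jap (ξ : Fin n → ℤ) : jap ξ ^ 2 = 1 + ∑ i, ((ξ i : ℝ)) ^ 2 :=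
  Real.sq_sqrt (by positivity)

theorem one_le_jap (ξ : Fin n → ℤ) : 1 ≤ jap ξ :=
  Real.one_le_sqrt.2 (by simp only [le_add_iff_nonneg_right]; positivity)

theorem znorm_shift_le_two_mul_jap (ξ : Fin n → ℤ) (j : Fin n) :
    znorm (fun i => ξ i + if i = j then 1 else 0) ≤ 2 * jap ξ := by
  have h := sq_le_sum_sq ξ j
  refine Real.sqrt_le_iff.2 ⟨by linarith [one_le_jap ξ], ?_⟩
  rw [sum_sq_shift, mul_pow, sq_jap]
  nlinarith [sq_nonneg ((ξ j : ℝ) - 1)]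

theorem norm_oscSymbol (ν ρ : ℝ) (ξ : Fin n → ℤ) : ‖oscSymbol ν ρ ξ‖ = znorm ξ ^ ν := by
  rw [oscSymbol, norm_mul, Complex.norm_exp_I_mul_ofReal, mul_one, Complex.norm_real]
  exact Real.norm_of_nonneg (Real.rpow_nonneg (Real.sqrt_nonneg _) _)

theorem oscSymbol_eq_oscProfile (ν ρ : ℝ) (ξ : Fin n → ℤ) :
    oscSymbol ν ρ ξ = oscProfile (ν / 2) ((1 - ρ) / 2) (∑ i, ((ξ i : ℝ)) ^ 2) := by
  have hu : (0 : ℝ) ≤ ∑ i, ((ξ i : ℝ)) ^ 2 := by positivity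
  rw [oscSymbol, oscProfile, znorm, Real.sqrt_eq_rpow, ← Real.rpow_mul hu, ← Real.rpow_mul hu,
    one_div_mul_eq_div, one_div_mul_eq_div]

end Lattice

section Estimates

variable {n : ℕ} {ν ρ : ℝ}

theorem norm_oscSymbol_shift_sub_le (hν : 0 ≤ ν) (ξ : Fin n → ℤ) (j : Fin n) :
    ‖oscSymbol ν ρ (fun i => ξ i + if i = j then 1 else 0) - oscSymbol ν ρ ξ‖ ≤
      (2 ^ ν + 1) * jap ξ ^ ν := by
  have hξ : znorm ξ ≤ jap ξ := Real.sqrt_le_sqrt (by linarith)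
  calc _ ≤ znorm (fun i => ξ i + if i = j then 1 else 0) ^ ν + znorm ξ ^ ν := by
        rw [← norm_oscSymbol, ← norm_oscSymbol ν ρ ξ]; exact norm_sub_le _ _
    _ ≤ (2 * jap ξ) ^ ν + jap ξ ^ ν := by
        gcongr
        · exact Real.sqrt_nonneg _
        · exact znorm_shift_le_two_mul_jap ξ j
        · exact Real.sqrt_nonneg _
    _ = (2 ^ ν + 1) * jap ξ ^ ν := by
        rw [Real.mul_rpow zero_le_two (zero_le_one.trans (one_le_jap ξ))]; ring

theorem norm_oscSymbol_shift_sub_le_of_sum_sq_le (hν : 0 ≤ ν) (hρ : ρ ≤ 1) (ξ : Fin n → ℤ)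
    (j : Fin n) (hξ : ∑ i, ((ξ i : ℝ)) ^ 2 ≤ 4) :
    ‖oscSymbol ν ρ (fun i => ξ i + if i = j then 1 else 0) - oscSymbol ν ρ ξ‖ ≤
      3 * (2 ^ ν + 1) * jap ξ ^ (ν - ρ) := by
  have h₁ := one_le_jap ξ
  have h₃ : jap ξ ≤ 3 := by nlinarith [sq_jap ξ]
  have hρpow : jap ξ ^ ρ ≤ 3 :=
    (Real.rpow_le_rpow_of_exponent_le h₁ hρ).trans (by rwa [Real.rpow_one])
  calc _ ≤ (2 ^ ν + 1) * jap ξ ^ ν := norm_oscSymbol_shift_sub_le hν ξ j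
    _ = (2 ^ ν + 1) * jap ξ ^ ρ * jap ξ ^ (ν - ρ) := by
        rw [mul_assoc, ← Real.rpow_add (by linarith), add_sub_cancel]
    _ ≤ (2 ^ ν + 1) * 3 * jap ξ ^ (ν - ρ) := by gcongr
    _ = 3 * (2 ^ ν + 1) * jap ξ ^ (ν - ρ) := by ring

theorem norm_oscSymbol_shift_sub_le_of_le_sum_sq (hν : 0 ≤ ν) (hρ : ρ ≤ 1) (ξ : Fin n → ℤ)
    (j : Fin n) (hξ : 4 ≤ ∑ i, ((ξ i : ℝ)) ^ 2) :
    ‖oscSymbol ν ρ (fun i => ξ i + if i = j then 1 else 0) - oscSymbol ν ρ ξ‖ ≤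
      3 * (ν / 2 + (1 - ρ) / 2) * 8 ^ |ν / 2 + (1 - ρ) / 2 - 1| * jap ξ ^ (ν - ρ) := by
  have h₁ := one_le_jap ξ
  have hξj : |2 * (ξ j : ℝ) + 1| ≤ 3 * jap ξ := by
    have := sq_le_sum_sq ξ j
    rw [abs_le]; constructor <;> nlinarith [sq_jap ξ]
  have hpow : (1 + ∑ i, ((ξ i : ℝ)) ^ 2) ^ (ν / 2 + (1 - ρ) / 2 - 1) * jap ξ = jap ξ ^ (ν - ρ) := by
    rw [← sq_jap, ← Real.rpow_natCast, ← Real.rpow_mul (by linarith),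
      ← Real.rpow_add_one (by linarith)]
    congr 1; push_cast; ring
  rw [oscSymbol_eq_oscProfile, oscSymbol_eq_oscProfile, sum_sq_shift]
  calc _ ≤ (ν / 2 + (1 - ρ) / 2) * 8 ^ |ν / 2 + (1 - ρ) / 2 - 1| *
        (1 + ∑ i, ((ξ i : ℝ)) ^ 2) ^ (ν / 2 + (1 - ρ) / 2 - 1) * |2 * (ξ j : ℝ) + 1| := by
        convert oscProfile.norm_sub_le (by linarith : 0 ≤ ν / 2) (by linarith : 0 ≤ (1 - ρ) / 2) hξ
          (add_two_mul_add_one_mem_Icc hξ (sq_le_sum_sq ξ j)) using 3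
        ring
    _ ≤ (ν / 2 + (1 - ρ) / 2) * 8 ^ |ν / 2 + (1 - ρ) / 2 - 1| *
        (1 + ∑ i, ((ξ i : ℝ)) ^ 2) ^ (ν / 2 + (1 - ρ) / 2 - 1) * (3 * jap ξ) := by
        gcongr
    _ = 3 * (ν / 2 + (1 - ρ) / 2) * 8 ^ |ν / 2 + (1 - ρ) / 2 - 1| * jap ξ ^ (ν - ρ) := by
        rw [← hpow]; ring

end Estimates

theorem oscillating_symbol_first_difference_general (n : ℕ) (ν ρ : ℝ) (hν : 0 < ν)
    (hρ₁ : ρ ≤ 1) (j : Fin n) :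
    ∃ C > 0, ∀ ξ : Fin n → ℤ,
      ‖oscSymbol ν ρ (fun i => ξ i + if i = j then 1 else 0) - oscSymbol ν ρ ξ‖ ≤
        C * jap ξ ^ (ν - ρ) := by
  have hC₀ : 0 < 3 * (2 ^ ν + 1 : ℝ) := by positivity
  have hC₁ : 0 ≤ 3 * (ν / 2 + (1 - ρ) / 2) * 8 ^ |ν / 2 + (1 - ρ) / 2 - 1| := by
    have : 0 ≤ ν / 2 + (1 - ρ) / 2 := by linarith
    positivity
  refine ⟨_, add_pos_of_pos_of_nonneg hC₀ hC₁, fun ξ => ?_⟩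
  have hjap : 0 ≤ jap ξ ^ (ν - ρ) := Real.rpow_nonneg (zero_le_one.trans (one_le_jap ξ)) _
  rcases le_total (∑ i, ((ξ i : ℝ)) ^ 2) 4 with hsmall | hlarge
  · exact (norm_oscSymbol_shift_sub_le_of_sum_sq_le hν.le hρ₁ ξ j hsmall).trans
      (mul_le_mul_of_nonneg_right (le_add_of_nonneg_right hC₁) hjap)
  · exact (norm_oscSymbol_shift_sub_le_of_le_sum_sq hν.le hρ₁ ξ j hlarge).trans
      (mul_le_mul_of_nonneg_right (le_add_of_nonneg_left hC₀.le) hjap)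

/-- The oscillating symbol `|ξ|^ν e^{i|ξ|^{1-ρ}}` satisfies the first-difference
estimate of the toroidal class `S^ν_{ρ,0}(𝕋ⁿ × ℤⁿ)`. -/
theorem oscillating_symbol_first_difference (n : ℕ) (ν ρ : ℝ) (hν : 0 < ν)
    (hρ₀ : 0 < ρ) (hρ₁ : ρ ≤ 1) (j : Fin n) :
    ∃ C > 0, ∀ ξ : Fin n → ℤ,
      ‖oscSymbol ν ρ (fun i => ξ i + if i = j then 1 else 0) - oscSymbol ν ρ ξ‖ ≤
        C * jap ξ ^ (ν - ρ) :=
  oscillating_symbol_first_difference_general n ν ρ hν hρ₁ j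
end
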